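/- Let X ⊆ ℝ^{n_1} be nonempty and compact, let G : ℝ^{n_1} → ℝ be continuous, and let f : ℝ^{n_1} → ℝ be a feedforward ReLU network with a scalar affine output layer (f is defined by x^{l+1} = max(0, W^l x^l + b^l) componentwise for l = 1,…,L−2 and f(x^1) = W^{L−1} x^{L−1} + b^{L−1} ∈ ℝ). Suppose the pre-activation bounds LB^{l+1}, UB^{l+1} are valid along the network trajectory of every x^1 ∈ X. Then the optimal value of the surrogate mixed-integer program — minimize G(x^1) + x^L over all x^1 ∈ X, hidden-layer variables x^2,…,x^{L−1} ≥ 0, output x^L ∈ ℝ, and binaries σ satisfying the big-M constraints of every layer — equals min_{x ∈ X} (G(x) + f(x)), and this minimum is attained at some x* ∈ X. -/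

import Mathlib

/-!
The big-M constraints of a single unit with binary `σ` force `x = max 0 z`: `σ = 0` gives
`0 ≤ x ≤ 0` and `z ≤ x`, while `σ = 1` gives `z ≤ x ≤ z` and `0 ≤ x`. Hence every feasible
point of the surrogate MIP is the network trajectory of its input, and conversely, when the
pre-activation bounds are valid, the trajectory with `σ` the activation pattern is feasible.
So the MIP values are exactly `{G x + f x | x ∈ X}`, whose least element exists by compactness
of `X` and continuity of `G + f`.
-/

open Matrix

/-- The trajectory of the hidden (ReLU) layers of a feedforward network:
`reluTraj n W b x1 0 = x1` and
`reluTraj n W b x1 (l+1) = max (0, W^l (reluTraj n W b x1 l) + b^l)` componentwise. -/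
def reluTraj (n : ℕ → ℕ) (W : ∀ l : ℕ, Matrix (Fin (n (l + 1))) (Fin (n l)) ℝ)
    (b : ∀ l : ℕ, Fin (n (l + 1)) → ℝ) (x1 : Fin (n 0) → ℝ) :
    ∀ l : ℕ, Fin (n l) → ℝ
  | 0 => x1
  | (l + 1) => fun i => max 0 (((W l).mulVec (reluTraj n W b x1 l) + b l) i)

/-- The big-M encoding of `x = max 0 z` with indicator `σ` and pre-activation bounds `lb, ub`. -/
def BigMReLU (lb ub z x σ : ℝ) : Prop :=
  (σ = 0 ∨ σ = 1) ∧ z ≤ x ∧ x ≤ z - (1 - σ) * lb ∧ x ≤ σ * ub ∧ 0 ≤ x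

lemma BigMReLU.eq_max {lb ub z x σ : ℝ} (h : BigMReLU lb ub z x σ) : x = max 0 z := by
  obtain ⟨hσ | hσ, hzx, hlb, hub, hx⟩ := h <;> subst hσ
  · have hx0 : x = 0 := le_antisymm (by simpa using hub) hx
    rw [hx0, max_eq_left (hx0 ▸ hzx)]
  · have hxz : x = z := le_antisymm (by simpa using hlb) hzx
    rw [hxz, max_eq_right (hxz ▸ hx)]

lemma bigMReLU_max_activation {lb ub z : ℝ} (hlb : lb ≤ z) (hub : z ≤ ub) :
    BigMReLU lb ub z (max 0 z) (if 0 ≤ z then 1 else 0) := by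
  by_cases hz : 0 ≤ z
  · simp only [BigMReLU, if_pos hz, max_eq_right hz]
    norm_num [hz, hub]
  · have hz' : z ≤ 0 := le_of_not_ge hz
    simp only [BigMReLU, if_neg hz, max_eq_left hz']
    norm_num [hz', hlb]

section ReLUNetwork

variable {n : ℕ → ℕ} {W : ∀ l : ℕ, Matrix (Fin (n (l + 1))) (Fin (n l)) ℝ}
  {b : ∀ l : ℕ, Fin (n (l + 1)) → ℝ}

lemma reluTraj_succ_apply (x : Fin (n 0) → ℝ) (l : ℕ) (i : Fin (n (l + 1))) :
    reluTraj n W b x (l + 1) i = max 0 ((W l *ᵥ reluTraj n W b x l + b l) i) :=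
  rfl

lemma continuous_reluTraj (l : ℕ) : Continuous fun x : Fin (n 0) → ℝ => reluTraj n W b x l := by
  induction l with
  | zero => exact continuous_id
  | succ l ih =>
    refine continuous_pi fun i => continuous_const.max ?_
    exact ((continuous_apply i).comp (Continuous.matrix_mulVec continuous_const ih)).add
      continuous_const

lemma eq_reluTraj_of_bigMReLU {LB UB σ : ∀ l : ℕ, Fin (n (l + 1)) → ℝ}
    {xs : ∀ l : ℕ, Fin (n l) → ℝ} {k : ℕ}
    (h : ∀ l, l < k → ∀ i,
      BigMReLU (LB l i) (UB l i) ((W l *ᵥ xs l + b l) i) (xs (l + 1) i) (σ l i)) :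
    ∀ l, l ≤ k → xs l = reluTraj n W b (xs 0) l
  | 0, _ => rfl
  | l + 1, hl => by
    have hxs := eq_reluTraj_of_bigMReLU h l (Nat.le_of_succ_le hl)
    funext i
    rw [reluTraj_succ_apply, ← hxs]
    exact (h l hl i).eq_max

lemma reluTraj_bigMReLU {LB UB : ∀ l : ℕ, Fin (n (l + 1)) → ℝ} {x : Fin (n 0) → ℝ} {k : ℕ}
    (hbounds : ∀ l, l < k → ∀ i,
      LB l i ≤ (W l *ᵥ reluTraj n W b x l + b l) i ∧
      (W l *ᵥ reluTraj n W b x l + b l) i ≤ UB l i) :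
    ∀ l, l < k → ∀ i, BigMReLU (LB l i) (UB l i) ((W l *ᵥ reluTraj n W b x l + b l) i)
      (reluTraj n W b x (l + 1) i)
      (if 0 ≤ (W l *ᵥ reluTraj n W b x l + b l) i then 1 else 0) := fun l hl i =>
  bigMReLU_max_activation (hbounds l hl i).1 (hbounds l hl i).2

end ReLUNetwork

theorem surrogate_mip_value_general (L : ℕ) (n : ℕ → ℕ)
    (W : ∀ l : ℕ, Matrix (Fin (n (l + 1))) (Fin (n l)) ℝ)
    (b : ∀ l : ℕ, Fin (n (l + 1)) → ℝ)
    (wout : Fin (n (L - 2)) → ℝ) (bout : ℝ)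
    (X : Set (Fin (n 0) → ℝ)) (hXne : X.Nonempty) (hXcomp : IsCompact X)
    (G : (Fin (n 0) → ℝ) → ℝ) (hG : Continuous G)
    (LB UB : ∀ l : ℕ, Fin (n (l + 1)) → ℝ)
    (hbounds : ∀ x ∈ X, ∀ l, l < L - 2 → ∀ i,
      LB l i ≤ ((W l).mulVec (reluTraj n W b x l) + b l) i ∧
      ((W l).mulVec (reluTraj n W b x l) + b l) i ≤ UB l i) :
    ∃ xstar ∈ X,
      IsLeast
        {v : ℝ | ∃ xs : ∀ l : ℕ, Fin (n l) → ℝ, ∃ σ : ∀ l : ℕ, Fin (n (l + 1)) → ℝ,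
          xs 0 ∈ X ∧
          (∀ l, l < L - 2 → ∀ i,
            (σ l i = 0 ∨ σ l i = 1) ∧
            ((W l).mulVec (xs l) + b l) i ≤ xs (l + 1) i ∧
            xs (l + 1) i ≤ ((W l).mulVec (xs l) + b l) i - (1 - σ l i) * LB l i ∧
            xs (l + 1) i ≤ σ l i * UB l i ∧ 0 ≤ xs (l + 1) i) ∧
          v = G (xs 0) + (wout ⬝ᵥ xs (L - 2) + bout)}
        (G xstar + (wout ⬝ᵥ reluTraj n W b xstar (L - 2) + bout)) ∧
      ∀ x ∈ X,
        G xstar + (wout ⬝ᵥ reluTraj n W b xstar (L - 2) + bout) ≤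
          G x + (wout ⬝ᵥ reluTraj n W b x (L - 2) + bout) := by
  have hcont : Continuous fun x => G x + (wout ⬝ᵥ reluTraj n W b x (L - 2) + bout) :=
    hG.add ((continuous_const.dotProduct (continuous_reluTraj _)).add continuous_const)
  obtain ⟨xstar, hxstar, hmin⟩ := hXcomp.exists_isMinOn hXne hcont.continuousOn
  refine ⟨xstar, hxstar, ⟨?_, ?_⟩, fun x hx => hmin hx⟩
  · exact ⟨reluTraj n W b xstar, _, hxstar, reluTraj_bigMReLU (hbounds xstar hxstar), rfl⟩
  · rintro v ⟨xs, σ, hxs, hfeas, rfl⟩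
    rw [eq_reluTraj_of_bigMReLU hfeas (L - 2) le_rfl]
    exact hmin hxs

/-- Let `X` be nonempty and compact, `G` continuous, and `f` a feedforward ReLU
network with a scalar affine output layer `f x = wout ⬝ᵥ (last hidden layer) + bout`,
whose pre-activation bounds are valid along the trajectory of every `x ∈ X`.
Then the optimal value of the surrogate MIP — minimize `G (xs 0) + x^L` over
`xs 0 ∈ X`, hidden-layer variables and binaries satisfying the big-M constraints of
every layer — equals `min_{x ∈ X} (G x + f x)`, attained at some `xstar ∈ X`. -/
theorem surrogate_mip_value (L : ℕ) (hL : 2 ≤ L) (n : ℕ → ℕ)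
    (W : ∀ l : ℕ, Matrix (Fin (n (l + 1))) (Fin (n l)) ℝ)
    (b : ∀ l : ℕ, Fin (n (l + 1)) → ℝ)
    (wout : Fin (n (L - 2)) → ℝ) (bout : ℝ)
    (X : Set (Fin (n 0) → ℝ)) (hXne : X.Nonempty) (hXcomp : IsCompact X)
    (G : (Fin (n 0) → ℝ) → ℝ) (hG : Continuous G)
    (LB UB : ∀ l : ℕ, Fin (n (l + 1)) → ℝ)
    (hbounds : ∀ x ∈ X, ∀ l, l < L - 2 → ∀ i,
      LB l i ≤ ((W l).mulVec (reluTraj n W b x l) + b l) i ∧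
      ((W l).mulVec (reluTraj n W b x l) + b l) i ≤ UB l i) :
    ∃ xstar ∈ X,
      IsLeast
        {v : ℝ | ∃ xs : ∀ l : ℕ, Fin (n l) → ℝ, ∃ σ : ∀ l : ℕ, Fin (n (l + 1)) → ℝ,
          xs 0 ∈ X ∧
          (∀ l, l < L - 2 → ∀ i,
            (σ l i = 0 ∨ σ l i = 1) ∧
            ((W l).mulVec (xs l) + b l) i ≤ xs (l + 1) i ∧
            xs (l + 1) i ≤ ((W l).mulVec (xs l) + b l) i - (1 - σ l i) * LB l i ∧
            xs (l + 1) i ≤ σ l i * UB l i ∧ 0 ≤ xs (l + 1) i) ∧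
          v = G (xs 0) + (wout ⬝ᵥ xs (L - 2) + bout)}
        (G xstar + (wout ⬝ᵥ reluTraj n W b xstar (L - 2) + bout)) ∧
      ∀ x ∈ X,
        G xstar + (wout ⬝ᵥ reluTraj n W b xstar (L - 2) + bout) ≤
          G x + (wout ⬝ᵥ reluTraj n W b x (L - 2) + bout) :=
  surrogate_mip_value_general L n W b wout bout X hXne hXcomp G hG LB UB hbounds
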